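/- arXiv:2107.10618 — 2 statements merged into one kernel-verified Lean document; each statement's English description precedes it below -/
import Mathlib

section
/- For all ρ > 0, m ∈ ℝ^d, M ∈ S₀^d, one has (1/2)|m|²/ρ ≤ e_kin(ρ,m,M), with equality if and only if M = m⊗m/ρ − (1/d)(|m|²/ρ) I_d. -/
/-!
Put `A := ρ⁻¹ • m ⊗ m - M`: it is symmetric with trace `|m|²/ρ`, and `eKin ρ m M = (d/2) λ_max(A)`.
Since `vᵀ A v ≤ λ_max(A) |v|²` for every `v`, the matrix `λ_max(A) • 1 - A` is positive
semidefinite. Its trace `d λ_max(A) - tr A` is therefore nonnegative, and it vanishes exactly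
when `A = λ_max(A) • 1`, a positive semidefinite matrix with zero trace being zero.
-/

open Matrix

noncomputable def lamMax {d : ℕ} (M : Matrix (Fin d) (Fin d) ℝ) : ℝ :=
  sSup {r : ℝ | ∃ v : Fin d → ℝ, v ⬝ᵥ v = 1 ∧ v ⬝ᵥ M.mulVec v = r}

noncomputable def eKin {d : ℕ} (ρ : ℝ) (m : Fin d → ℝ) (M : Matrix (Fin d) (Fin d) ℝ) : ℝ :=
  ((d : ℝ) / 2) * lamMax (ρ⁻¹ • vecMulVec m m - M)

section lamMax

variable {d : ℕ}

lemma bddAbove_rayleigh_quotients (A : Matrix (Fin d) (Fin d) ℝ) :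
    BddAbove {r : ℝ | ∃ v : Fin d → ℝ, v ⬝ᵥ v = 1 ∧ v ⬝ᵥ A *ᵥ v = r} := by
  refine ⟨∑ i, ∑ j, |A i j|, ?_⟩
  rintro _ ⟨v, hv, rfl⟩
  have hv_le : ∀ i, |v i| ≤ 1 := fun i => abs_le_one_iff_mul_self_le_one.2 <|
    hv ▸ Finset.single_le_sum (fun j _ => mul_self_nonneg (v j)) (Finset.mem_univ i)
  simp only [dotProduct, mulVec, Finset.mul_sum]
  refine Finset.sum_le_sum fun i _ => Finset.sum_le_sum fun j _ => ?_
  calc v i * (A i j * v j) ≤ |v i| * (|A i j| * |v j|) := by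
        rw [← abs_mul, ← abs_mul]; exact le_abs_self _
    _ ≤ 1 * (|A i j| * 1) := by gcongr <;> exact hv_le _
    _ = |A i j| := by ring

lemma dotProduct_mulVec_le_lamMax (A : Matrix (Fin d) (Fin d) ℝ) {v : Fin d → ℝ}
    (hv : v ⬝ᵥ v = 1) : v ⬝ᵥ A *ᵥ v ≤ lamMax A :=
  le_csSup (bddAbove_rayleigh_quotients A) ⟨v, hv, rfl⟩

lemma dotProduct_mulVec_le_lamMax_mul (A : Matrix (Fin d) (Fin d) ℝ) (v : Fin d → ℝ) :
    v ⬝ᵥ A *ᵥ v ≤ lamMax A * (v ⬝ᵥ v) := by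
  rcases eq_or_ne v 0 with rfl | hv0
  · simp
  have hpos : 0 < v ⬝ᵥ v := by simpa using dotProduct_star_self_pos_iff.2 hv0
  set c := (√(v ⬝ᵥ v))⁻¹
  have hc : c * c = (v ⬝ᵥ v)⁻¹ := by rw [← mul_inv, Real.mul_self_sqrt hpos.le]
  have hunit : (c • v) ⬝ᵥ (c • v) = 1 := by
    rw [smul_dotProduct, dotProduct_smul, smul_eq_mul, smul_eq_mul, ← mul_assoc, hc,
      inv_mul_cancel₀ hpos.ne']
  have := dotProduct_mulVec_le_lamMax A hunit
  rw [mulVec_smul, smul_dotProduct, dotProduct_smul, smul_eq_mul, smul_eq_mul, ← mul_assoc, hc,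
    inv_mul_le_iff₀ hpos] at this
  linarith

lemma posSemidef_lamMax_smul_one_sub {A : Matrix (Fin d) (Fin d) ℝ} (hA : A.IsSymm) :
    (lamMax A • 1 - A).PosSemidef := by
  refine .of_dotProduct_mulVec_nonneg ?_ fun v => ?_
  · simpa [isHermitian_iff_isSymm] using (isSymm_one.smul (lamMax A)).sub hA
  · simpa [sub_mulVec, smul_mulVec, dotProduct_smul, mul_comm]
      using dotProduct_mulVec_le_lamMax_mul A v

lemma trace_le_mul_lamMax {A : Matrix (Fin d) (Fin d) ℝ} (hA : A.IsSymm) :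
    A.trace ≤ d * lamMax A := by
  simpa [trace_sub, trace_smul, mul_comm] using (posSemidef_lamMax_smul_one_sub hA).trace_nonneg

lemma lamMax_smul_one [NeZero d] (c : ℝ) : lamMax (c • 1 : Matrix (Fin d) (Fin d) ℝ) = c := by
  have : {r : ℝ | ∃ v : Fin d → ℝ, v ⬝ᵥ v = 1 ∧ v ⬝ᵥ (c • 1 : Matrix _ _ ℝ) *ᵥ v = r} = {c} := by
    ext r
    simp only [smul_mulVec, one_mulVec, dotProduct_smul, smul_eq_mul, Set.mem_ofPred_eq,
      Set.mem_singleton_iff]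
    refine ⟨fun ⟨v, hv, hr⟩ => by rw [← hr, hv, mul_one], fun hr => ⟨Pi.single 0 1, ?_, ?_⟩⟩
    all_goals simp [hr]
  rw [lamMax, this, csSup_singleton]

lemma trace_eq_mul_lamMax_iff {A : Matrix (Fin d) (Fin d) ℝ} (hA : A.IsSymm) :
    A.trace = d * lamMax A ↔ A = (A.trace / d) • 1 := by
  rcases eq_zero_or_neZero d with rfl | hd
  · simpa using Subsingleton.elim A 0
  have hd0 : (d : ℝ) ≠ 0 := NeZero.ne _
  constructor
  · intro h
    have hA_eq : A = lamMax A • 1 := by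
      rw [eq_comm, ← sub_eq_zero, ← (posSemidef_lamMax_smul_one_sub hA).trace_eq_zero_iff]
      simp [trace_sub, trace_smul, h, mul_comm]
    rwa [h, mul_div_cancel_left₀ _ hd0]
  · intro h
    conv_rhs => rw [h, lamMax_smul_one]
    field_simp
    
end lamMax

theorem eKin_lower_bound_general {d : ℕ} (ρ : ℝ)
    (m : Fin d → ℝ) (M : Matrix (Fin d) (Fin d) ℝ)
    (hsymm : M.IsSymm) (htr : M.trace = 0) :
    (1 / 2) * (m ⬝ᵥ m) / ρ ≤ eKin ρ m M ∧
    ((1 / 2) * (m ⬝ᵥ m) / ρ = eKin ρ m M ↔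
      M = ρ⁻¹ • vecMulVec m m
        - ((1 / (d : ℝ)) * ((m ⬝ᵥ m) / ρ)) • (1 : Matrix (Fin d) (Fin d) ℝ)) := by
  set A := ρ⁻¹ • vecMulVec m m - M with hA
  have hA_symm : A.IsSymm := (IsSymm.smul (transpose_vecMulVec m m) ρ⁻¹).sub hsymm
  have hA_trace : A.trace = m ⬝ᵥ m / ρ := by
    simp [hA, trace_sub, trace_smul, htr, trace_vecMulVec, div_eq_inv_mul]
  have hlhs : (1 / 2) * (m ⬝ᵥ m) / ρ = (1 / 2) * A.trace := by rw [hA_trace]; ring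
  have heKin : eKin ρ m M = (1 / 2) * (d * lamMax A) := by rw [eKin]; ring
  rw [hlhs, heKin, mul_right_inj' (by norm_num : (1 / 2 : ℝ) ≠ 0), trace_eq_mul_lamMax_iff hA_symm, hA_trace]
  refine ⟨by linarith [trace_le_mul_lamMax hA_symm], ?_⟩
  rw [hA, sub_eq_iff_eq_add, ← sub_eq_iff_eq_add', eq_comm, one_div_mul_eq_div]

/-- (1/2)|m|²/ρ ≤ e_kin(ρ,m,M), with equality iff
M = m⊗m/ρ − (1/d)(|m|²/ρ)I_d. -/
theorem eKin_lower_bound {d : ℕ} (hd : 2 ≤ d) (ρ : ℝ) (hρ : 0 < ρ)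
    (m : Fin d → ℝ) (M : Matrix (Fin d) (Fin d) ℝ)
    (hsymm : M.IsSymm) (htr : M.trace = 0) :
    (1 / 2) * (m ⬝ᵥ m) / ρ ≤ eKin ρ m M ∧
    ((1 / 2) * (m ⬝ᵥ m) / ρ = eKin ρ m M ↔
      M = ρ⁻¹ • vecMulVec m m
        - ((1 / (d : ℝ)) * ((m ⬝ᵥ m) / ρ)) • (1 : Matrix (Fin d) (Fin d) ℝ)) :=
  eKin_lower_bound_general ρ m M hsymm htr
end

section
/- Fix ρ > 0 and r > 0. The convex hull of the set L_{ρ,r} := {(m, (m⊗m − (1/d)|m|² I_d)/ρ) : m ∈ ℝ^d, |m| = r} ⊂ ℝ^d × S₀^d equals {(m,M) ∈ ℝ^d × S₀^d : e_kin(ρ,m,M) ≤ r²/(2ρ)}. -/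
open Matrix

/-- m ∘ m := m ⊗ m − (1/d)|m|² I_d. -/
noncomputable def circProd {d : ℕ} (m : Fin d → ℝ) : Matrix (Fin d) (Fin d) ℝ :=
  vecMulVec m m - ((1 / (d : ℝ)) * (m ⬝ᵥ m)) • (1 : Matrix (Fin d) (Fin d) ℝ)

/-- The set L_{ρ,r} ⊂ ℝ^d × S₀^d. -/
noncomputable def Lset (d : ℕ) (ρ r : ℝ) :
    Set ((Fin d → ℝ) × Matrix (Fin d) (Fin d) ℝ) :=
  {q | ∃ m : Fin d → ℝ, m ⬝ᵥ m = r ^ 2 ∧ q = (m, ρ⁻¹ • circProd m)}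

/-! For symmetric `M`, the condition `e_kin(ρ, m, M) ≤ r²/(2ρ)` says that the matrix
`A = (r²/d) I - m ⊗ m + ρ M` is positive semidefinite, and `A = 0` on `L_{ρ,r}`. Since `e_kin` is
a supremum of the convex functions `(m, M) ↦ ρ⁻¹ (m ⬝ v)² - v ⬝ M v`, its sublevel set is convex,
which gives one inclusion.

Conversely, `tr A = r² - |m|²` because `M` is trace-free, so the spectral theorem writes `A` as a
convex combination of the matrices `(r² - |m|²) u ⊗ u` with `|u| = 1`. As `(m, M)` depends
affinely on `A`, it suffices to treat `A = (r² - |m|²) u ⊗ u`. Let `a ≤ 0 ≤ b` be the roots of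
`x² + 2 (m ⬝ u) x = r² - |m|²`, so that `m + a u` and `m + b u` lie on the sphere of radius `r`.
The weights `s, t` with `s a + t b = 0` give `s a² + t b² = r² - |m|²`, and the corresponding
convex combination of the two points of `L_{ρ,r}` is `(m, M)`. -/

lemma isSymm_vecMulVec_self {α n : Type*} [CommMagma α] (m : n → α) : (vecMulVec m m).IsSymm :=
  transpose_vecMulVec m m

namespace Matrix

variable {n : Type*} [Fintype n] [DecidableEq n]

lemma IsHermitian.eq_sum_eigenvalues_smul_vecMulVec {A : Matrix n n ℝ} (hA : A.IsHermitian) :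
    A = ∑ i, hA.eigenvalues i •
      vecMulVec (hA.eigenvectorBasis i).ofLp (hA.eigenvectorBasis i).ofLp := by
  conv_lhs => rw [hA.spectral_theorem, Unitary.conjStarAlgAut_apply]
  ext i j
  simp [Matrix.mul_apply, Matrix.sum_apply, vecMulVec_apply, diagonal_apply, mul_assoc,
    mul_left_comm]

lemma IsHermitian.dotProduct_eigenvectorBasis_self {A : Matrix n n ℝ} (hA : A.IsHermitian) (i : n) :
    (hA.eigenvectorBasis i).ofLp ⬝ᵥ (hA.eigenvectorBasis i).ofLp = 1 := by
  have := inner_self_eq_one_of_norm_eq_one (𝕜 := ℝ) (hA.eigenvectorBasis.orthonormal.1 i)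
  rwa [EuclideanSpace.inner_eq_star_dotProduct, star_trivial] at this

lemma PosSemidef.mem_convexHull_trace_smul_vecMulVec [Nonempty n] {A : Matrix n n ℝ}
    (hA : A.PosSemidef) :
    A ∈ convexHull ℝ {B | ∃ u : n → ℝ, u ⬝ᵥ u = 1 ∧ B = A.trace • vecMulVec u u} := by
  rcases hA.trace_nonneg.eq_or_lt with htr | htr
  · obtain ⟨i⟩ := ‹Nonempty n›
    refine subset_convexHull ℝ _ ⟨Pi.single i 1, by simp, ?_⟩
    rw [← htr, zero_smul, ← hA.trace_eq_zero_iff, htr]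
  set μ := hA.1.eigenvalues
  set e := fun i => (hA.1.eigenvectorBasis i).ofLp
  have he : ∀ i, e i ⬝ᵥ e i = 1 := hA.1.dotProduct_eigenvectorBasis_self
  have hA_eq : A = ∑ i, μ i • vecMulVec (e i) (e i) := hA.1.eq_sum_eigenvalues_smul_vecMulVec
  have hsum : ∑ i, μ i = A.trace := by
    conv_rhs => rw [hA_eq]
    simp [trace_sum, trace_vecMulVec, he]
  have hcomb : ∑ i, (μ i / A.trace) • (A.trace • vecMulVec (e i) (e i)) = A := by
    simp only [smul_smul, div_mul_cancel₀ _ htr.ne', ← hA_eq]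
  have hweights : ∑ i, μ i / A.trace = 1 := by rw [← Finset.sum_div, hsum, div_self htr.ne']
  rw [← hcomb]
  refine (convex_convexHull ℝ _).sum_mem (fun i _ => div_nonneg (hA.eigenvalues_nonneg i) htr.le)
    hweights fun i _ => subset_convexHull ℝ _ ⟨e i, he i, by rw [hcomb]⟩

end Matrix

section Quadratic

variable {n : Type*} [Fintype n]

lemma dotProduct_vecMulVec_self_mulVec (m v : n → ℝ) :
    v ⬝ᵥ (vecMulVec m m *ᵥ v) = (m ⬝ᵥ v) ^ 2 := by
  simp [vecMulVec_mulVec, dotProduct_comm m v, sq]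

lemma dotProduct_smul_vecMulVec_sub_mulVec (ρ : ℝ) (m v : n → ℝ) (M : Matrix n n ℝ) :
    v ⬝ᵥ ((ρ⁻¹ • vecMulVec m m - M) *ᵥ v) = ρ⁻¹ * (m ⬝ᵥ v) ^ 2 - v ⬝ᵥ (M *ᵥ v) := by
  rw [sub_mulVec, dotProduct_sub, smul_mulVec, dotProduct_smul, smul_eq_mul,
    dotProduct_vecMulVec_self_mulVec]

lemma abs_le_one_of_dotProduct_self_eq_one {v : n → ℝ} (hv : v ⬝ᵥ v = 1) (i : n) : |v i| ≤ 1 := by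
  rw [← sq_le_one_iff_abs_le_one, ← hv, dotProduct, sq]
  exact Finset.single_le_sum (f := fun j => v j * v j) (fun j _ => mul_self_nonneg (v j))
    (Finset.mem_univ i)

lemma dotProduct_mulVec_le_sum_abs {v : n → ℝ} (hv : v ⬝ᵥ v = 1) (T : Matrix n n ℝ) :
    v ⬝ᵥ (T *ᵥ v) ≤ ∑ i, ∑ j, |T i j| := by
  simp only [dotProduct, mulVec, Finset.mul_sum]
  gcongr with i _ j _
  calc v i * (T i j * v j) ≤ |v i| * (|T i j| * |v j|) := by
        rw [← abs_mul, ← abs_mul]; exact le_abs_self _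
    _ ≤ 1 * (|T i j| * 1) := by
        gcongr
        · exact abs_le_one_of_dotProduct_self_eq_one hv i
        · exact abs_le_one_of_dotProduct_self_eq_one hv j
    _ = |T i j| := by ring

lemma dotProduct_mulVec_le_of_forall_unit {T : Matrix n n ℝ} {c : ℝ}
    (h : ∀ v : n → ℝ, v ⬝ᵥ v = 1 → v ⬝ᵥ (T *ᵥ v) ≤ c) (x : n → ℝ) :
    x ⬝ᵥ (T *ᵥ x) ≤ c * (x ⬝ᵥ x) := by
  rcases eq_or_ne x 0 with rfl | hx
  · simp
  have hxx : 0 < x ⬝ᵥ x :=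
    lt_of_le_of_ne (Finset.sum_nonneg fun i _ => mul_self_nonneg (x i))
      (Ne.symm (dotProduct_self_eq_zero.not.mpr hx))
  set s := √(x ⬝ᵥ x)
  have hs : 0 < s := Real.sqrt_pos.mpr hxx
  have hs2 : s ^ 2 = x ⬝ᵥ x := Real.sq_sqrt hxx.le
  have hunit : (s⁻¹ • x) ⬝ᵥ (s⁻¹ • x) = 1 := by
    rw [smul_dotProduct, dotProduct_smul, smul_eq_mul, smul_eq_mul, ← hs2]
    field_simp
  have h_unit := h _ hunit
  rw [mulVec_smul, smul_dotProduct, dotProduct_smul, smul_eq_mul, smul_eq_mul, ← mul_assoc,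
    ← mul_inv, inv_mul_le_iff₀ (by positivity)] at h_unit
  rwa [← hs2, mul_comm c, sq]

end Quadratic

section LamMax

variable {d : ℕ}

lemma bddAbove_lamMax_set (T : Matrix (Fin d) (Fin d) ℝ) :
    BddAbove {r : ℝ | ∃ v : Fin d → ℝ, v ⬝ᵥ v = 1 ∧ v ⬝ᵥ T *ᵥ v = r} := by
  refine ⟨∑ i, ∑ j, |T i j|, ?_⟩
  rintro _ ⟨v, hv, rfl⟩
  exact dotProduct_mulVec_le_sum_abs hv T

lemma le_lamMax (T : Matrix (Fin d) (Fin d) ℝ) {v : Fin d → ℝ} (hv : v ⬝ᵥ v = 1) :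
    v ⬝ᵥ (T *ᵥ v) ≤ lamMax T :=
  le_csSup (bddAbove_lamMax_set T) ⟨v, hv, rfl⟩

lemma lamMax_le [NeZero d] {T : Matrix (Fin d) (Fin d) ℝ} {c : ℝ}
    (h : ∀ v : Fin d → ℝ, v ⬝ᵥ v = 1 → v ⬝ᵥ (T *ᵥ v) ≤ c) : lamMax T ≤ c :=
  csSup_le ⟨_, Pi.single 0 1, by simp, rfl⟩ fun _ ⟨v, hv, hr⟩ => hr ▸ h v hv

lemma posSemidef_smul_one_sub_of_lamMax_le {T : Matrix (Fin d) (Fin d) ℝ} (hT : T.IsSymm)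
    {c : ℝ} (h : lamMax T ≤ c) : (c • (1 : Matrix (Fin d) (Fin d) ℝ) - T).PosSemidef := by
  refine .of_dotProduct_mulVec_nonneg ((isSymm_one.smul c).sub hT) fun x => ?_
  have := dotProduct_mulVec_le_of_forall_unit (fun v hv => (le_lamMax T hv).trans h) x
  rw [star_trivial, sub_mulVec, dotProduct_sub, smul_mulVec, one_mulVec, dotProduct_smul,
    smul_eq_mul]
  linarith

end LamMax

section EKin

variable {d : ℕ}

lemma convexOn_eKin [NeZero d] {ρ : ℝ} (hρ : 0 ≤ ρ) :
    ConvexOn ℝ Set.univ fun q : (Fin d → ℝ) × Matrix (Fin d) (Fin d) ℝ => eKin ρ q.1 q.2 := by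
  refine ConvexOn.smul (by positivity) ⟨convex_univ, fun q₁ _ q₂ _ a b ha hb hab => ?_⟩
  refine lamMax_le fun v hv => ?_
  have hsq := (even_two.convexOn_pow (𝕜 := ℝ)).2 trivial trivial ha hb hab
    (x := q₁.1 ⬝ᵥ v) (y := q₂.1 ⬝ᵥ v)
  simp only [smul_eq_mul] at hsq ⊢
  calc v ⬝ᵥ ((ρ⁻¹ • vecMulVec (a • q₁ + b • q₂).1 (a • q₁ + b • q₂).1 - (a • q₁ + b • q₂).2) *ᵥ v)
      = ρ⁻¹ * (a * (q₁.1 ⬝ᵥ v) + b * (q₂.1 ⬝ᵥ v)) ^ 2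
          - (a * (v ⬝ᵥ (q₁.2 *ᵥ v)) + b * (v ⬝ᵥ (q₂.2 *ᵥ v))) := by
        simp only [dotProduct_smul_vecMulVec_sub_mulVec, Prod.fst_add, Prod.snd_add, Prod.smul_fst,
          Prod.smul_snd, add_dotProduct, smul_dotProduct, add_mulVec, smul_mulVec,
          dotProduct_add, dotProduct_smul, smul_eq_mul]
    _ ≤ a * (ρ⁻¹ * (q₁.1 ⬝ᵥ v) ^ 2 - v ⬝ᵥ (q₁.2 *ᵥ v))
          + b * (ρ⁻¹ * (q₂.1 ⬝ᵥ v) ^ 2 - v ⬝ᵥ (q₂.2 *ᵥ v)) := by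
        nlinarith [mul_le_mul_of_nonneg_left hsq (inv_nonneg.mpr hρ)]
    _ ≤ a * lamMax (ρ⁻¹ • vecMulVec q₁.1 q₁.1 - q₁.2)
          + b * lamMax (ρ⁻¹ • vecMulVec q₂.1 q₂.1 - q₂.2) := by
        rw [← dotProduct_smul_vecMulVec_sub_mulVec, ← dotProduct_smul_vecMulVec_sub_mulVec]
        gcongr <;> exact le_lamMax _ hv

end EKin

section Lset

variable {d : ℕ}

lemma isSymm_circProd (m : Fin d → ℝ) : (circProd m).IsSymm :=
  (isSymm_vecMulVec_self m).sub (isSymm_one.smul _)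

lemma trace_circProd [NeZero d] (m : Fin d → ℝ) : (circProd m).trace = 0 := by
  have hd : (d : ℝ) ≠ 0 := NeZero.ne _
  rw [circProd, trace_sub, trace_vecMulVec, trace_smul, trace_one, Fintype.card_fin, smul_eq_mul]
  field_simp
  ring

lemma exists_roots_zero_mem_segment (c : ℝ) {S : ℝ} (hS : 0 ≤ S) :
    ∃ a b : ℝ, a ^ 2 + 2 * c * a = S ∧ b ^ 2 + 2 * c * b = S ∧ (0 : ℝ) ∈ segment ℝ a b := by
  set D := √(c ^ 2 + S)
  have hD : D ^ 2 = c ^ 2 + S := Real.sq_sqrt (by positivity)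
  have hcD : |c| ≤ D := Real.abs_le_sqrt (by linarith)
  refine ⟨-c - D, -c + D, by linear_combination hD, by linear_combination hD, ?_⟩
  rw [segment_eq_Icc (by linarith [abs_nonneg c])]
  constructor <;> linarith [abs_le.mp hcD]

lemma mem_convexHull_Lset_of_rankOne (ρ : ℝ) {r : ℝ} {m u : Fin d → ℝ} (hu : u ⬝ᵥ u = 1)
    (hm : m ⬝ᵥ m ≤ r ^ 2) :
    (m, ρ⁻¹ • (vecMulVec m m + (r ^ 2 - m ⬝ᵥ m) • vecMulVec u u - (r ^ 2 / d) • 1)) ∈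
      convexHull ℝ (Lset d ρ r) := by
  obtain ⟨a, b, ha, hb, s, t, hs, ht, hst, hab⟩ :=
    exists_roots_zero_mem_segment (m ⬝ᵥ u) (sub_nonneg.mpr hm)
  have sphere : ∀ x : ℝ, x ^ 2 + 2 * (m ⬝ᵥ u) * x = r ^ 2 - m ⬝ᵥ m →
      (m + x • u) ⬝ᵥ (m + x • u) = r ^ 2 := fun x hx => by
    simp only [add_dotProduct, dotProduct_add, smul_dotProduct, dotProduct_smul, hu,
      dotProduct_comm u m, smul_eq_mul]
    linear_combination hx
  have mem : ∀ x : ℝ, x ^ 2 + 2 * (m ⬝ᵥ u) * x = r ^ 2 - m ⬝ᵥ m →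
      (m + x • u, ρ⁻¹ • circProd (m + x • u)) ∈ convexHull ℝ (Lset d ρ r) := fun x hx =>
    subset_convexHull ℝ _ ⟨_, sphere x hx, rfl⟩
  simp only [smul_eq_mul] at hab
  have hvar : s * a ^ 2 + t * b ^ 2 = r ^ 2 - m ⬝ᵥ m := by
    linear_combination s * ha + t * hb - 2 * (m ⬝ᵥ u) * hab + (r ^ 2 - m ⬝ᵥ m) * hst
  convert (convex_convexHull ℝ _) (mem a ha) (mem b hb) hs ht hst using 1
  refine Prod.ext (funext fun i => ?_) (ext fun i j => ?_)
  · simp only [Prod.smul_fst, Prod.fst_add, Pi.add_apply, Pi.smul_apply, smul_eq_mul]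
    linear_combination (-(u i)) * hab - m i * hst
  · simp only [Prod.smul_snd, Prod.snd_add, circProd, sphere a ha, sphere b hb,
      Matrix.add_apply, Matrix.sub_apply, Matrix.smul_apply, vecMulVec_apply, one_apply,
      Pi.add_apply, Pi.smul_apply, smul_eq_mul]
    linear_combination (-ρ⁻¹) * ((m i * m j - (if i = j then 1 else 0) * (r ^ 2 / d)) * hst
      + (m i * u j + u i * m j) * hab + u i * u j * hvar)

end Lset

section Main

variable {d : ℕ} [NeZero d] {ρ r : ℝ}

lemma Lset_subset_eKin_sublevel :
    Lset d ρ r ⊆ {q | q.2.IsSymm ∧ q.2.trace = 0 ∧ eKin ρ q.1 q.2 ≤ r ^ 2 / (2 * ρ)} := by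
  rintro _ ⟨m, hm, rfl⟩
  refine ⟨(isSymm_circProd m).smul _, by rw [trace_smul, trace_circProd, smul_zero], ?_⟩
  have hd : (d : ℝ) ≠ 0 := NeZero.ne _
  have hT : ρ⁻¹ • vecMulVec m m - ρ⁻¹ • circProd m = (ρ⁻¹ * (r ^ 2 / d)) • 1 := by
    rw [circProd, hm, ← smul_sub, sub_sub_cancel, smul_smul]
    ring_nf
  have hlam : lamMax (ρ⁻¹ • vecMulVec m m - ρ⁻¹ • circProd m) ≤ ρ⁻¹ * (r ^ 2 / d) :=
    lamMax_le fun v hv => by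
      rw [hT, smul_mulVec, one_mulVec, dotProduct_smul, hv, smul_eq_mul, mul_one]
  calc eKin ρ m (ρ⁻¹ • circProd m) ≤ (d / 2) * (ρ⁻¹ * (r ^ 2 / d)) :=
        mul_le_mul_of_nonneg_left hlam (by positivity)
    _ = r ^ 2 / (2 * ρ) := by field_simp

lemma convex_eKin_sublevel (hρ : 0 ≤ ρ) (c : ℝ) :
    Convex ℝ {q : (Fin d → ℝ) × Matrix (Fin d) (Fin d) ℝ |
      q.2.IsSymm ∧ q.2.trace = 0 ∧ eKin ρ q.1 q.2 ≤ c} := by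
  have hsub : Convex ℝ {q : (Fin d → ℝ) × Matrix (Fin d) (Fin d) ℝ | q.2.IsSymm ∧ q.2.trace = 0} :=
    fun q₁ ⟨hs₁, ht₁⟩ q₂ ⟨hs₂, ht₂⟩ a b _ _ _ =>
      ⟨(hs₁.smul a).add (hs₂.smul b), by simp [trace_add, trace_smul, ht₁, ht₂]⟩
  convert hsub.inter ((convexOn_eKin hρ).convex_le c) using 1
  ext q
  simp [and_assoc]

lemma mem_convexHull_Lset_of_eKin_le (hρ : 0 < ρ) {m : Fin d → ℝ}
    {M : Matrix (Fin d) (Fin d) ℝ} (hM : M.IsSymm) (htr : M.trace = 0)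
    (he : eKin ρ m M ≤ r ^ 2 / (2 * ρ)) : (m, M) ∈ convexHull ℝ (Lset d ρ r) := by
  have hd : (d : ℝ) ≠ 0 := NeZero.ne _
  have hlam : lamMax (ρ⁻¹ • vecMulVec m m - M) ≤ ρ⁻¹ * (r ^ 2 / d) := by
    refine le_of_mul_le_mul_left (a := (d : ℝ) / 2) ?_ (by positivity)
    calc _ = eKin ρ m M := rfl
      _ ≤ _ := he
      _ = _ := by field_simp
  set A := ρ • ((ρ⁻¹ * (r ^ 2 / d)) • (1 : Matrix (Fin d) (Fin d) ℝ) - (ρ⁻¹ • vecMulVec m m - M))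
  have hA : A.PosSemidef :=
    (posSemidef_smul_one_sub_of_lamMax_le (((isSymm_vecMulVec_self m).smul _).sub hM) hlam).smul
      hρ.le
  have htrA : A.trace = r ^ 2 - m ⬝ᵥ m := by
    simp only [A, trace_smul, trace_sub, trace_one, trace_vecMulVec, htr, Fintype.card_fin,
      smul_eq_mul, sub_zero]
    field_simp
  let F : Matrix (Fin d) (Fin d) ℝ →ᵃ[ℝ] (Fin d → ℝ) × Matrix (Fin d) (Fin d) ℝ :=
    { toFun := fun B => (m, ρ⁻¹ • (vecMulVec m m + B - (r ^ 2 / d) • 1))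
      linear := ρ⁻¹ • LinearMap.inr ℝ _ _
      map_vadd' := fun B B' => Prod.ext (by simp) (by
        simp only [vadd_eq_add, LinearMap.smul_apply, LinearMap.coe_inr, Prod.smul_mk,
          smul_zero, Prod.mk_add_mk, zero_add]
        module) }
  have hFA : F A = (m, M) := by
    refine Prod.ext rfl (ext fun i j => ?_)
    simp only [AffineMap.coe_mk, Matrix.smul_apply, Matrix.sub_apply, Matrix.add_apply,
      smul_eq_mul, F, A]
    field_simp
    ring
  have hF_rankOne : F '' {B | ∃ u : Fin d → ℝ, u ⬝ᵥ u = 1 ∧ B = A.trace • vecMulVec u u} ⊆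
      convexHull ℝ (Lset d ρ r) := by
    rintro _ ⟨_, ⟨u, hu, rfl⟩, rfl⟩
    rw [htrA]
    exact mem_convexHull_Lset_of_rankOne ρ hu (by linarith [hA.trace_nonneg])
  rw [← hFA]
  exact (convex_convexHull ℝ _).convexHull_subset_iff.mpr hF_rankOne
    (F.image_convexHull _ ▸ Set.mem_image_of_mem F hA.mem_convexHull_trace_smul_vecMulVec)

end Main

theorem convexHull_Lset_general {d : ℕ} (hd : 2 ≤ d) (ρ r : ℝ) (hρ : 0 < ρ) :
    convexHull ℝ (Lset d ρ r) =
      {q : (Fin d → ℝ) × Matrix (Fin d) (Fin d) ℝ |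
        q.2.IsSymm ∧ q.2.trace = 0 ∧ eKin ρ q.1 q.2 ≤ r ^ 2 / (2 * ρ)} := by
  have : NeZero d := ⟨by omega⟩
  refine (convexHull_min Lset_subset_eKin_sublevel (convex_eKin_sublevel hρ.le _)).antisymm ?_
  rintro ⟨m, M⟩ ⟨hM, htr, he⟩
  exact mem_convexHull_Lset_of_eKin_le hρ hM htr he

/-- the convex hull of L_{ρ,r} is
{(m,M) ∈ ℝ^d × S₀^d : e_kin(ρ,m,M) ≤ r²/(2ρ)}. -/
theorem convexHull_Lset {d : ℕ} (hd : 2 ≤ d) (ρ r : ℝ) (hρ : 0 < ρ) (hr : 0 < r) :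
    convexHull ℝ (Lset d ρ r) =
      {q : (Fin d → ℝ) × Matrix (Fin d) (Fin d) ℝ |
        q.2.IsSymm ∧ q.2.trace = 0 ∧ eKin ρ q.1 q.2 ≤ r ^ 2 / (2 * ρ)} :=
  convexHull_Lset_general hd ρ r hρ
end
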